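/- arXiv:2108.06934 — 6 statements merged into one kernel-verified Lean document; each statement's English description precedes it below -/
import Mathlib

section
/- For I = \{0\}, J = \{1\} (so q = 2) and k \ge 3, the number r(n) of binary words of length n starting with 0, ending with 1, containing no k consecutive 0s and no k consecutive 1s, satisfies for all n \ge 2: r(n) = \sum_{j=1}^{k-1} r(n-j) + d(n), where d(n) = 1 if n \equiv 0 (mod k), d(n) = -1 if n \equiv 1 (mod k), and d(n) = 0 otherwise, with conventions r(0)=1 and r(m)=0 for m<0 and r(1)=0. -/
/-!
A nonempty word ending in `1` with no run of length `k` is a sequence of alternating maximal runs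
of lengths in `[1, k - 1]`, and it starts with `0` exactly when it has an even number of runs.
Counting the empty word as even (this is `r 0 = 1`), stripping the first run shows that the numbers
`e m` and `o m` of even and odd such words of length `m` satisfy `o m = ∑ j, e (m - j)` and, for
`m ≠ 0`, `e m = ∑ j, o (m - j)`, where `j` ranges over `[1, k - 1]`. So `D = e - o` satisfies
`D m + ∑ j, D (m - j) = 0` for `m ≠ 0`, with `D 0 = 1` and `D m = 0` for `m < 0`: its generating
function is `(1 - x) / (1 - x ^ k)`, so `D n = d n`. Finally
`e n = ∑ j, o (n - j) = ∑ j, e (n - j) + D n`.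
-/

open Finset

def NoRun {α : Type*} (k : ℕ) (w : List α) : Prop := ∀ c, ¬ List.replicate k c <:+: w

section Runs

variable {α : Type*}

open List

theorem exists_eq_replicate_append (c : α) :
    ∀ w : List α, ∃ j v, w = replicate j c ++ v ∧ v.head? ≠ some c
  | [] => ⟨0, [], rfl, by simp⟩
  | a :: w => by
    by_cases ha : a = c
    · obtain ⟨j, v, rfl, hv⟩ := exists_eq_replicate_append c w
      exact ⟨j + 1, v, by simp [ha, replicate_succ], hv⟩
    · exact ⟨0, a :: w, rfl, by simpa using ha⟩

theorem replicate_append_inj {c : α} {j j' : ℕ} {v v' : List α} (hv : v.head? ≠ some c)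
    (hv' : v'.head? ≠ some c) (h : replicate j c ++ v = replicate j' c ++ v') :
    j = j' ∧ v = v' := by
  induction j generalizing j' with
  | zero => cases j' with
    | zero => simpa using h
    | succ j' =>
      simp only [replicate_zero, nil_append, replicate_succ, cons_append] at h
      simp [h] at hv
  | succ j ih => cases j' with
    | zero =>
      simp only [replicate_succ, cons_append, replicate_zero, nil_append] at h
      simp [← h] at hv'
    | succ j' =>
      obtain ⟨rfl, rfl⟩ := ih (by simpa [replicate_succ] using h)
      exact ⟨rfl, rfl⟩

theorem noRun_replicate_append_iff {k j : ℕ} {c : α} {v : List α} (hv : v.head? ≠ some c) :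
    NoRun k (replicate j c ++ v) ↔ j < k ∧ NoRun k v := by
  refine ⟨fun h => ⟨?_, fun d hd => h d (infix_append_of_infix_right hd)⟩, ?_⟩
  · by_contra! hjk
    exact h c (infix_append_of_infix_left (infix_replicate_iff.mpr ⟨by simpa, by simp⟩))
  rintro ⟨hjk, hrun⟩ d hd
  rcases infix_append_iff_ne_nil.mp hd with h | h | ⟨l₁, l₂, h₁, h₂, hl, hs, hp⟩
  · have := h.length_le
    simp only [length_replicate] at this
    omega
  · exact hrun d h
  obtain ⟨x, hx⟩ := exists_mem_of_ne_nil l₁ h₁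
  obtain ⟨y, t, rfl⟩ := exists_cons_of_ne_nil h₂
  obtain ⟨s, rfl⟩ := hp
  have hxc : x = c := eq_of_mem_replicate (hs.subset hx)
  have hxd : x = d := eq_of_mem_replicate (hl ▸ mem_append_left _ hx)
  have hyd : y = d := eq_of_mem_replicate (hl ▸ mem_append_right _ mem_cons_self)
  exact hv (by simp [hyd, ← hxd, hxc])

theorem finite_subtype_length_eq [Finite α] (n : ℤ) (p : List α → Prop) :
    Finite {v : List α // (v.length : ℤ) = n ∧ p v} :=
  ((List.finite_length_eq α n.toNat).subset fun v hv => by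
    have := hv.1
    simp only [Set.mem_ofPred_eq]
    omega).to_subtype

theorem card_noRun_head_eq_sum [Finite α] (k : ℕ) (c : α) (P : List α → Prop) (m : ℤ) :
    Nat.card {w : List α // (w.length : ℤ) = m ∧ NoRun k w ∧ w.head? = some c ∧ P w} =
      ∑ j ∈ Icc 1 (k - 1), Nat.card {v : List α //
        (v.length : ℤ) = m - j ∧ NoRun k v ∧ v.head? ≠ some c ∧ P (replicate j c ++ v)} := by
  have := fun j : ℕ => finite_subtype_length_eq (α := α) (m - j)
    (fun v => NoRun k v ∧ v.head? ≠ some c ∧ P (replicate j c ++ v))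
  rw [← sum_coe_sort, ← Nat.card_sigma]
  symm
  refine Nat.card_eq_of_bijective
    (fun x => ⟨replicate x.1 c ++ x.2.1, ?_, ?_, ?_, x.2.2.2.2.2⟩) ⟨?_, ?_⟩
  · obtain ⟨⟨j, hj⟩, ⟨v, hlen, -⟩⟩ := x
    dsimp only at hlen ⊢
    simp only [length_append, length_replicate]
    omega
  · obtain ⟨⟨j, hj⟩, ⟨v, -, hrun, hv, -⟩⟩ := x
    simp only [mem_Icc] at hj
    exact (noRun_replicate_append_iff hv).mpr ⟨by dsimp only; omega, hrun⟩
  · obtain ⟨⟨j, hj⟩, -⟩ := x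
    obtain ⟨i, rfl⟩ : ∃ i, j = i + 1 := ⟨j - 1, by simp only [mem_Icc] at hj; omega⟩
    simp [replicate_succ]
  · rintro ⟨⟨j, hj⟩, ⟨v, hv⟩⟩ ⟨⟨j', hj'⟩, ⟨v', hv'⟩⟩ h
    obtain ⟨hjj, rfl⟩ := replicate_append_inj hv.2.2.1 hv'.2.2.1 (congrArg Subtype.val h)
    obtain rfl : j = j' := hjj
    rfl
  · rintro ⟨w, hlen, hrun, hhead, hP⟩
    obtain ⟨j, v, rfl, hv⟩ := exists_eq_replicate_append c w
    obtain ⟨hjk, hvrun⟩ := (noRun_replicate_append_iff hv).mp hrun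
    have hj : j ≠ 0 := by rintro rfl; exact hv (by simpa using hhead)
    simp only [length_append, length_replicate, Nat.cast_add] at hlen
    exact ⟨⟨⟨j, by simp only [mem_Icc]; omega⟩, ⟨v, by dsimp only; omega, hvrun, hv, hP⟩⟩, rfl⟩

theorem exists_replicate_infix_iff {k : ℕ} {c : α} {w : List α} :
    (∃ v : List α, v.length = k ∧ (∀ a ∈ v, a = c) ∧ v <:+: w) ↔ replicate k c <:+: w :=
  ⟨fun ⟨_, hl, hc, h⟩ => eq_replicate_iff.mpr ⟨hl, hc⟩ ▸ h,
    fun h => ⟨_, length_replicate, fun _ => eq_of_mem_replicate, h⟩⟩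

end Runs

theorem Fin.two_ne_one_iff {x : Fin 2} : x ≠ 1 ↔ x = 0 := by
  fin_cases x <;> decide

theorem Fin.two_ne_zero_iff {x : Fin 2} : x ≠ 0 ↔ x = 1 := by
  fin_cases x <;> decide

def evenWords (k : ℕ) (m : ℤ) : Set (List (Fin 2)) :=
  {w | (w.length : ℤ) = m ∧ NoRun k w ∧ w.head? ≠ some 1 ∧ w.getLast? ≠ some 0}

def oddWords (k : ℕ) (m : ℤ) : Set (List (Fin 2)) :=
  {w | (w.length : ℤ) = m ∧ NoRun k w ∧ w.head? = some 1 ∧ w.getLast? = some 1}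

theorem card_oddWords (k : ℕ) (m : ℤ) :
    Nat.card (oddWords k m) = ∑ j ∈ Icc 1 (k - 1), Nat.card (evenWords k (m - j)) := by
  refine (card_noRun_head_eq_sum k 1 (fun w => w.getLast? = some 1) m).trans
    (sum_congr rfl fun j hj => Nat.card_congr (Equiv.subtypeEquivRight fun v => ?_))
  have hj : j ≠ 0 := by simp only [mem_Icc] at hj; omega
  rcases h : v.getLast? with _ | x
  · simp [evenWords, h, List.getLast?_replicate, hj]
  · fin_cases x <;> simp [evenWords, h]

theorem card_evenWords {m : ℤ} (k : ℕ) (hm : m ≠ 0) :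
    Nat.card (evenWords k m) = ∑ j ∈ Icc 1 (k - 1), Nat.card (oddWords k (m - j)) := by
  refine Eq.trans ?_ ((card_noRun_head_eq_sum k 0 (fun w => w.getLast? = some 1) m).trans
    (sum_congr rfl fun j hj => Nat.card_congr (Equiv.subtypeEquivRight fun v => ?_)))
  · refine Nat.card_congr (Equiv.subtypeEquivRight fun w => ?_)
    rcases w with _ | ⟨a, w⟩
    · simp [evenWords, Ne.symm hm]
    rcases h : (a :: w).getLast? with _ | x
    · simp at h
    simp [evenWords, h, Fin.two_ne_one_iff, Fin.two_ne_zero_iff]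
  · rcases v with _ | ⟨a, v⟩
    · simp [oddWords, List.getLast?_replicate]
    simp [oddWords, Fin.two_ne_zero_iff]

theorem evenWords_zero {k : ℕ} (hk : k ≠ 0) : evenWords k 0 = {[]} := by
  ext w
  simp only [evenWords, Set.mem_ofPred_eq, Set.mem_singleton_iff, Nat.cast_eq_zero,
    List.length_eq_zero_iff]
  constructor
  · exact fun h => h.1
  · rintro rfl
    refine ⟨rfl, fun c h => ?_, by simp, by simp⟩
    simp [hk] at h

theorem oddWords_zero (k : ℕ) : oddWords k 0 = ∅ := by
  ext w
  simp +contextual [oddWords]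

theorem evenWords_of_neg (k : ℕ) {m : ℤ} (hm : m < 0) : evenWords k m = ∅ := by
  ext w
  simp only [evenWords, Set.mem_ofPred_eq, Set.mem_empty_iff_false, iff_false]
  omega

theorem oddWords_of_neg (k : ℕ) {m : ℤ} (hm : m < 0) : oddWords k m = ∅ := by
  ext w
  simp only [oddWords, Set.mem_ofPred_eq, Set.mem_empty_iff_false, iff_false]
  omega

theorem noRun_iff_fin_two (k : ℕ) (w : List (Fin 2)) :
    NoRun k w ↔ (¬ ∃ v : List (Fin 2), v.length = k ∧ (∀ a ∈ v, a = 0) ∧ v <:+: w) ∧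
      (¬ ∃ v : List (Fin 2), v.length = k ∧ (∀ a ∈ v, a = 1) ∧ v <:+: w) := by
  rw [exists_replicate_infix_iff, exists_replicate_infix_iff]
  exact Fin.forall_fin_two

theorem mem_evenWords_iff {k m : ℕ} (hm : 1 ≤ m) (w : List (Fin 2)) :
    w ∈ evenWords k m ↔ w.length = m ∧ w.getD 0 0 = 0 ∧ w.getD (m - 1) 0 = 1 ∧
      (¬ ∃ v : List (Fin 2), v.length = k ∧ (∀ a ∈ v, a = 0) ∧ v <:+: w) ∧
      (¬ ∃ v : List (Fin 2), v.length = k ∧ (∀ a ∈ v, a = 1) ∧ v <:+: w) := by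
  rw [← noRun_iff_fin_two]
  simp only [evenWords, Set.mem_ofPred_eq, Nat.cast_inj]
  refine and_congr_right fun hlen => ?_
  subst hlen
  obtain ⟨a, t, rfl⟩ := List.exists_cons_of_length_pos hm
  simp only [List.getD_eq_getElem?_getD, ← List.getLast?_eq_getElem?]
  rcases h : (a :: t).getLast? with _ | x
  · simp at h
  simp only [List.head?_cons, List.getElem?_cons_zero, Option.getD_some,
    (Option.some_injective _).ne_iff, Fin.two_ne_one_iff, Fin.two_ne_zero_iff]
  tauto


theorem sum_range_eq_add_sum_Icc {M : Type*} [AddCommMonoid M] {k : ℕ} (hk : k ≠ 0)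
    (f : ℕ → M) : ∑ j ∈ range k, f j = f 0 + ∑ j ∈ Icc 1 (k - 1), f j := by
  rw [range_eq_Ico, sum_eq_sum_Ico_succ_bot (Nat.pos_of_ne_zero hk)]
  refine congrArg _ (sum_congr (ext fun j => ?_) fun _ _ => rfl)
  simp only [mem_Ico, mem_Icc]
  omega

theorem eq_of_add_sum_eq_zero {k : ℕ} {f g : ℤ → ℤ}
    (hf : ∀ m, 0 < m → f m + ∑ j ∈ Icc 1 (k - 1), f (m - j) = 0)
    (hg : ∀ m, 0 < m → g m + ∑ j ∈ Icc 1 (k - 1), g (m - j) = 0)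
    (hinit : ∀ m, 1 - (k : ℤ) < m → m ≤ 0 → f m = g m) :
    ∀ m, 1 - (k : ℤ) < m → f m = g m := by
  intro m hm
  induction hn : (m + k).toNat using Nat.strong_induction_on generalizing m with
  | _ n ih =>
    rcases le_or_gt m 0 with h0 | h0
    · exact hinit m hm h0
    have hsum : ∑ j ∈ Icc 1 (k - 1), f (m - j) = ∑ j ∈ Icc 1 (k - 1), g (m - j) :=
      sum_congr rfl fun j hj => by
        simp only [mem_Icc] at hj
        exact ih _ (by omega) _ (by omega) rfl
    linarith [hf m h0, hg m h0]

theorem sum_range_ite_emod_eq {k : ℕ} {a : ℤ} (ha : 0 ≤ a) (hak : a < k) (m : ℤ) :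
    ∑ j ∈ range k, (if (m - j) % k = a then 1 else 0 : ℤ) = 1 := by
  have key : ∀ j ∈ range k, (m - j) % k = a ↔ j = ((m - a) % k).toNat := by
    intro j hj
    have hjk : (j : ℤ) < k := by simpa using hj
    have := Int.emod_nonneg (m - a) (by omega : (k : ℤ) ≠ 0)
    calc (m - j) % k = a ↔ (m - j) % k = a % k := by rw [Int.emod_eq_of_lt ha hak]
      _ ↔ (m - a) % k = j % k := by
        rw [Int.emod_eq_emod_iff_emod_sub_eq_zero, Int.emod_eq_emod_iff_emod_sub_eq_zero,
          sub_right_comm]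
      _ ↔ j = ((m - a) % k).toNat := by
        rw [Int.emod_eq_of_lt (by omega) hjk]
        omega
  have hk : (0 : ℤ) < k := by omega
  rw [sum_congr rfl fun j hj => if_congr (key j hj) rfl rfl, sum_ite_eq', if_pos]
  simp only [mem_range]
  have := Int.emod_nonneg (m - a) hk.ne'
  have := Int.emod_lt_of_pos (m - a) hk
  omega

def residueSign (k : ℕ) (n : ℤ) : ℤ :=
  if n % k = 0 then 1 else if n % k = 1 then -1 else 0

theorem residueSign_eq_sub (k : ℕ) (n : ℤ) :
    residueSign k n = (if n % k = 0 then 1 else 0) - (if n % k = 1 then 1 else 0) := by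
  unfold residueSign
  split_ifs <;> omega

theorem residueSign_add_sum {k : ℕ} (hk : 2 ≤ k) (m : ℤ) :
    residueSign k m + ∑ j ∈ Icc 1 (k - 1), residueSign k (m - j) = 0 := by
  have h := sum_range_eq_add_sum_Icc (by omega : k ≠ 0) fun j => residueSign k (m - j)
  simp only [Nat.cast_zero, sub_zero] at h
  rw [← h]
  simp only [residueSign_eq_sub, sum_sub_distrib]
  rw [sum_range_ite_emod_eq le_rfl (by omega), sum_range_ite_emod_eq zero_le_one (by omega),
    sub_self]

theorem residueSign_of_nonpos {k : ℕ} {m : ℤ} (h1 : 1 - (k : ℤ) < m) (h2 : m ≤ 0) :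
    residueSign k m = if m = 0 then 1 else 0 := by
  rcases h2.lt_or_eq with h2 | rfl
  · have : m % k = m + k := by
      rw [← Int.add_emod_right, Int.emod_eq_of_lt (by omega) (by omega)]
    simp only [residueSign, this]
    split_ifs <;> omega
  · simp [residueSign]

noncomputable def signedCount (k : ℕ) (m : ℤ) : ℤ :=
  Nat.card (evenWords k m) - Nat.card (oddWords k m)

theorem signedCount_add_sum (k : ℕ) {m : ℤ} (hm : m ≠ 0) :
    signedCount k m + ∑ j ∈ Icc 1 (k - 1), signedCount k (m - j) = 0 := by
  simp only [signedCount, sum_sub_distrib, card_evenWords k hm, card_oddWords k m]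
  push_cast
  ring

theorem signedCount_of_nonpos {k : ℕ} (hk : k ≠ 0) {m : ℤ} (hm : m ≤ 0) :
    signedCount k m = if m = 0 then 1 else 0 := by
  rcases hm.lt_or_eq with hm | rfl
  · simp [signedCount, evenWords_of_neg k hm, oddWords_of_neg k hm, hm.ne]
  · simp [signedCount, evenWords_zero hk, oddWords_zero]

theorem signedCount_eq_residueSign {k : ℕ} (hk : 2 ≤ k) {m : ℤ} (hm : 1 - (k : ℤ) < m) :
    signedCount k m = residueSign k m := by
  refine eq_of_add_sum_eq_zero (f := signedCount k) (g := residueSign k)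
    (fun m hm => signedCount_add_sum k hm.ne')
    (fun m _ => residueSign_add_sum hk m) (fun m h1 h2 => ?_) m hm
  rw [signedCount_of_nonpos (by omega) h2, residueSign_of_nonpos h1 h2]

theorem card_evenWords_eq_sum_add {k : ℕ} (hk : 2 ≤ k) {n : ℤ} (hn : 0 < n) :
    (Nat.card (evenWords k n) : ℤ) =
      ∑ j ∈ Icc 1 (k - 1), (Nat.card (evenWords k (n - j)) : ℤ) + residueSign k n := by
  have heven : (Nat.card (evenWords k n) : ℤ) =
      ∑ j ∈ Icc 1 (k - 1), (Nat.card (oddWords k (n - j)) : ℤ) := by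
    exact_mod_cast card_evenWords k hn.ne'
  have hsum := signedCount_add_sum k hn.ne'
  rw [signedCount_eq_residueSign hk (by omega)] at hsum
  simp only [signedCount, sum_sub_distrib] at hsum
  linarith

/-- For `I = {0}`, `J = {1}` (so `q = 2`) and `k ≥ 3`, the number `r n` of
binary words of length `n` starting with `0`, ending with `1`, containing no `k`
consecutive `0`s and no `k` consecutive `1`s (with `r 0 = 1`, `r 1 = 0`, `r m = 0` for
`m < 0`) satisfies, for all `n ≥ 2`,
`r n = ∑_{j=1}^{k-1} r (n-j) + d n`, where `d n = 1` if `n ≡ 0 (mod k)`,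
`d n = -1` if `n ≡ 1 (mod k)`, and `d n = 0` otherwise. -/
theorem stmt14 (k : ℕ) (hk : 3 ≤ k)
    (r : ℤ → ℕ)
    (hneg : ∀ m : ℤ, m < 0 → r m = 0) (h0 : r 0 = 1)
    (hcard : ∀ m : ℕ, 1 ≤ m → r m = Nat.card {w : List (Fin 2) //
      w.length = m ∧ w.getD 0 0 = 0 ∧ w.getD (m - 1) 0 = 1 ∧
      (¬ ∃ v : List (Fin 2), v.length = k ∧ (∀ a ∈ v, a = 0) ∧ v <:+: w) ∧
      (¬ ∃ v : List (Fin 2), v.length = k ∧ (∀ a ∈ v, a = 1) ∧ v <:+: w)}) :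
    ∀ n : ℤ, 2 ≤ n →
      (r n : ℤ) = (∑ j ∈ Finset.Icc 1 (k - 1), (r (n - j) : ℤ)) +
        (if n % k = 0 then 1 else if n % k = 1 then -1 else 0) := by
  have hr : ∀ m, r m = Nat.card (evenWords k m) := by
    intro m
    rcases lt_trichotomy m 0 with hm | rfl | hm
    · simp [hneg m hm, evenWords_of_neg k hm]
    · simp [h0, evenWords_zero (by omega : k ≠ 0)]
    · lift m to ℕ using hm.le
      rw [hcard m (by omega)]
      exact Nat.card_congr
        (Equiv.subtypeEquivRight fun w => (mem_evenWords_iff (by omega) w).symm)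
  intro n hn
  simp only [hr]
  exact card_evenWords_eq_sum_add (by omega) (by omega)
end

section
/- Let b(m) be the number of words of length m over \mathbb{Z}_q that contain no codeword of the variable-length non-overlapping code \mathcal{J} = \bigcup_{i=h}^n J(i) as a subword, with b(0)=1 and b(m)=0 for m<0. Then for all m \ge h: q \cdot b(m-1) - b(m) = \sum_{i=h}^{n} b(m-i) \cdot |J(i)|, and b(m) = q^m for 0 \le m < h. -/
/-!
Appending a letter to a word of length `k` avoiding the code gives a word whose only possible
occurrence of a codeword is as a suffix, so the `q · b k` extensions split into the `b (k + 1)`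
avoiding words and the words `p ++ c` with `c` a codeword. For a non-overlapping code the
codeword `c` is determined by the word, and then `p` must avoid the code; conversely `p ++ c`
minus its last letter avoids the code whenever `p` does, since a codeword straddling the
junction would overlap with `c` and one inside `c` would be a proper factor of `c`.
-/

/-- A code, given as a set of words, is non-overlapping if (1) no nonempty proper
prefix of a codeword equals a nonempty proper suffix of a codeword (including of
itself), and (2) no codeword contains a distinct codeword as a contiguous subword. -/
def NonOverlapping {α : Type*} (S : Set (List α)) : Prop :=
  (∀ u ∈ S, ∀ v ∈ S, ∀ p : List α, p ≠ [] → p ≠ u → p ≠ v → p <+: u → ¬ p <:+ v) ∧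
  (∀ u ∈ S, ∀ v ∈ S, u ≠ v → ¬ v <:+: u)


open Finset

section NonOverlappingCodes

variable {α : Type*} {S : Set (List α)}

def Avoids (S : Set (List α)) (w : List α) : Prop := ¬ ∃ c ∈ S, c <:+: w

def avoidingWords (S : Set (List α)) (k : ℕ) : Set (List α) := {w | w.length = k ∧ Avoids S w}

def codewordsOfLength (S : Set (List α)) (i : ℕ) : Set (List α) := {c | c ∈ S ∧ c.length = i}

theorem Avoids.of_infix {v w : List α} (hw : Avoids S w) (hvw : v <:+: w) : Avoids S v :=
  fun ⟨c, hc, hcv⟩ => hw ⟨c, hc, hcv.trans hvw⟩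

theorem Avoids.ne_nil_of_mem {w c : List α} (hw : Avoids S w) (hc : c ∈ S) : c ≠ [] := by
  rintro rfl
  exact hw ⟨[], hc, List.nil_infix⟩

namespace NonOverlapping

theorem eq_of_append_eq (hS : NonOverlapping S) {p p' c c' : List α} (hc : c ∈ S) (hc' : c' ∈ S)
    (h : p ++ c = p' ++ c') : p = p' ∧ c = c' := by
  wlog hle : c.length ≤ c'.length generalizing p p' c c'
  · obtain ⟨hp, hc⟩ := this hc' hc h.symm (by omega)
    exact ⟨hp.symm, hc.symm⟩
  have hcc' : c <:+ c' :=
    List.suffix_of_suffix_length_le (h ▸ List.suffix_append p c) (List.suffix_append p' c') hle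
  obtain rfl : c = c' := by_contra fun hne => hS.2 c' hc' c hc (Ne.symm hne) hcc'.isInfix
  exact ⟨List.append_cancel_right h, rfl⟩

theorem avoids_append_of_prefix (hS : NonOverlapping S) {p c c' : List α} (hp : Avoids S p)
    (hc : c ∈ S) (hc'c : c' <+: c) (hlt : c'.length < c.length) : Avoids S (p ++ c') := by
  rintro ⟨d, hd, hdin⟩
  rcases List.infix_append_iff_ne_nil.mp hdin with hdp | hdc' | ⟨d₁, d₂, hd₁, hd₂, rfl, -, hd₂c'⟩
  · exact hp ⟨d, hd, hdp⟩
  · have := hdc'.length_le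
    exact hS.2 c hc d hd (by rintro rfl; omega) (hdc'.trans hc'c.isInfix)
  · -- `d₂` is a nonempty proper suffix of `d₁ ++ d₂` and a nonempty proper prefix of `c`
    have := hd₂c'.length_le
    have := List.length_pos_iff.mpr hd₁
    refine hS.1 c hc (d₁ ++ d₂) hd d₂ hd₂ (by rintro rfl; omega) ?_ (hd₂c'.trans hc'c)
      (List.suffix_append d₁ d₂)
    intro h
    have := congrArg List.length h
    simp only [List.length_append] at this
    omega

theorem avoids_append_dropLast (hS : NonOverlapping S) {p c : List α} (hp : Avoids S p)
    (hc : c ∈ S) : Avoids S (p ++ c.dropLast) :=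
  hS.avoids_append_of_prefix hp hc c.dropLast_prefix <| by
    simpa [List.length_dropLast] using List.length_pos_iff.mpr (hp.ne_nil_of_mem hc)

end NonOverlapping

theorem exists_eq_append_of_avoids_dropLast {w : List α} (hw : Avoids S w.dropLast)
    (hw' : ¬ Avoids S w) : ∃ p c, c ∈ S ∧ Avoids S p ∧ w = p ++ c := by
  obtain ⟨c, hc, s, t, rfl⟩ := not_not.mp hw'
  have hc₀ := hw.ne_nil_of_mem hc
  obtain rfl : t = [] := by
    by_contra ht
    rw [List.dropLast_append_of_ne_nil ht] at hw
    exact hw ⟨c, hc, List.infix_append s c t.dropLast⟩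
  rw [List.append_nil, List.dropLast_append_of_ne_nil hc₀] at hw
  exact ⟨s, c, hc, hw.of_infix List.infix_append_left, List.append_nil _⟩

def lastLetterExtensions (S : Set (List α)) (k : ℕ) : Set (List α) :=
  {w | w.length = k + 1 ∧ Avoids S w.dropLast}

theorem avoidingWords_succ_subset_lastLetterExtensions (S : Set (List α)) (k : ℕ) :
    avoidingWords S (k + 1) ⊆ lastLetterExtensions S k :=
  fun w ⟨hw, hwS⟩ => ⟨hw, hwS.of_infix w.dropLast_prefix.isInfix⟩

def avoidingWordsProdEquiv (S : Set (List α)) (k : ℕ) :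
    avoidingWords S k × α ≃ lastLetterExtensions S k where
  toFun x := ⟨x.1.1 ++ [x.2], by simp [x.1.2.1], by simpa using x.1.2.2⟩
  invFun w := (⟨w.1.dropLast, by simp [w.2.1], w.2.2⟩,
    w.1.getLast (List.ne_nil_of_length_eq_add_one w.2.1))
  left_inv x := by simp
  right_inv w := Subtype.ext (List.dropLast_append_getLast _)

theorem NonOverlapping.append_mem_lastLetterExtensions_diff (hS : NonOverlapping S)
    {p c : List α} (hp : Avoids S p) (hc : c ∈ S) {k : ℕ} (hlen : p.length + c.length = k + 1) :
    p ++ c ∈ lastLetterExtensions S k \ avoidingWords S (k + 1) := by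
  refine ⟨⟨by simpa using hlen, ?_⟩, fun h => h.2 ⟨c, hc, List.infix_append_right⟩⟩
  rw [List.dropLast_append_of_ne_nil (hp.ne_nil_of_mem hc)]
  exact hS.avoids_append_dropLast hp hc

section Counting

variable [Finite α]

instance (S : Set (List α)) (k : ℕ) : Finite (avoidingWords S k) :=
  ((List.finite_length_eq α k).subset fun _ hw => hw.1).to_subtype

instance (S : Set (List α)) (i : ℕ) : Finite (codewordsOfLength S i) :=
  ((List.finite_length_eq α i).subset fun _ hc => hc.2).to_subtype

instance (S : Set (List α)) (k : ℕ) : Finite (lastLetterExtensions S k) :=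
  ((List.finite_length_eq α (k + 1)).subset fun _ hw => hw.1).to_subtype

theorem NonOverlapping.card_lastLetterExtensions_diff (hS : NonOverlapping S) (k : ℕ) :
    Nat.card ↥(lastLetterExtensions S k \ avoidingWords S (k + 1)) = ∑ x ∈ antidiagonal (k + 1),
      Nat.card (avoidingWords S x.2) * Nat.card (codewordsOfLength S x.1) := by
  let split : (Σ x : antidiagonal (k + 1), avoidingWords S x.1.2 × codewordsOfLength S x.1.1) →
      ↥(lastLetterExtensions S k \ avoidingWords S (k + 1)) := fun ⟨x, p, c⟩ =>
    ⟨p.1 ++ c.1, hS.append_mem_lastLetterExtensions_diff p.2.2 c.2.1 <| by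
      rw [p.2.1, c.2.2, add_comm]; exact HasAntidiagonal.mem_antidiagonal.mp x.2⟩
  have split_injective : split.Injective := by
    rintro ⟨⟨⟨i, j⟩, hij⟩, ⟨p, hp⟩, ⟨c, hc⟩⟩ ⟨⟨⟨i', j'⟩, hij'⟩, ⟨p', hp'⟩, ⟨c', hc'⟩⟩ h
    obtain ⟨rfl, rfl⟩ := hS.eq_of_append_eq hc.1 hc'.1 (congrArg Subtype.val h)
    obtain rfl : i = i' := hc.2.symm.trans hc'.2
    obtain rfl : j = j' := hp.1.symm.trans hp'.1
    rfl
  have split_surjective : split.Surjective := by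
    rintro ⟨w, ⟨hw, hwd⟩, hwS⟩
    obtain ⟨p, c, hc, hp, rfl⟩ := exists_eq_append_of_avoids_dropLast hwd fun h => hwS ⟨hw, h⟩
    refine ⟨⟨⟨(c.length, p.length), ?_⟩, ⟨p, rfl, hp⟩, ⟨c, hc, rfl⟩⟩, rfl⟩
    rw [HasAntidiagonal.mem_antidiagonal, add_comm, ← hw, List.length_append]
  rw [← Nat.card_congr (Equiv.ofBijective split ⟨split_injective, split_surjective⟩),
    Nat.card_sigma, ← Finset.sum_coe_sort (antidiagonal (k + 1))]
  simp only [Nat.card_prod]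

theorem NonOverlapping.card_avoidingWords_mul_card (hS : NonOverlapping S) (k : ℕ) :
    Nat.card (avoidingWords S k) * Nat.card α =
      Nat.card (avoidingWords S (k + 1)) + ∑ x ∈ antidiagonal (k + 1),
        Nat.card (avoidingWords S x.2) * Nat.card (codewordsOfLength S x.1) := by
  classical
  rw [← Nat.card_prod, Nat.card_congr (avoidingWordsProdEquiv S k),
    ← Nat.card_congr (Equiv.Set.sumDiffSubset (avoidingWords_succ_subset_lastLetterExtensions S k)),
    Nat.card_sum, hS.card_lastLetterExtensions_diff]

end Counting

theorem avoidingWords_eq_of_forall_lt {k : ℕ} (h : ∀ c ∈ S, k < c.length) :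
    avoidingWords S k = {w | w.length = k} := by
  refine Set.ext fun w => ⟨And.left, fun hw => ⟨hw, ?_⟩⟩
  rintro ⟨c, hc, hcw⟩
  have := h c hc
  have : c.length ≤ k := hw ▸ hcw.length_le
  omega

theorem card_setOf_length_eq [Fintype α] (k : ℕ) :
    Nat.card {w : List α | w.length = k} = Fintype.card α ^ k := by
  change Nat.card (List.Vector α k) = _
  rw [Nat.card_eq_fintype_card, card_vector]

theorem sum_Icc_mul_eq_sum_range {f : ℤ → ℕ} (hf : ∀ m < 0, f m = 0) {g : ℕ → ℕ} {h n : ℕ}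
    (hg : ∀ i ∉ Icc h n, g i = 0) (m : ℕ) :
    ∑ i ∈ Icc h n, (f (m - i) : ℤ) * g i = ∑ i ∈ range (m + 1), (f (m - i : ℕ) : ℤ) * g i := by
  have hIcc : ∑ i ∈ Icc h n, (f (m - i) : ℤ) * g i =
      ∑ i ∈ range (m + n + 1), (f (m - i) : ℤ) * g i :=
    sum_subset (fun i hi => by simp only [mem_Icc, mem_range] at hi ⊢; omega)
      fun i _ hi => by simp [hg i hi]
  have hrange : ∑ i ∈ range (m + 1), (f (m - i) : ℤ) * g i =
      ∑ i ∈ range (m + n + 1), (f (m - i) : ℤ) * g i :=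
    sum_subset (range_subset_range.mpr (by omega)) fun i _ hi => by
      rw [mem_range] at hi
      simp [hf (m - i) (by omega)]
  rw [hIcc, ← hrange]
  refine sum_congr rfl fun i hi => ?_
  rw [Nat.cast_sub (Nat.le_of_lt_succ (mem_range.mp hi))]

end NonOverlappingCodes

theorem stmt15_general (q h n : ℕ) (hh : 2 ≤ h)
    (𝒥 : Set (List (Fin q))) (hlen : ∀ w ∈ 𝒥, h ≤ w.length ∧ w.length ≤ n)
    (hno : NonOverlapping 𝒥)
    (Jc : ℕ → ℕ) (hJc : ∀ i : ℕ, Jc i = Nat.card {w : List (Fin q) // w ∈ 𝒥 ∧ w.length = i})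
    (b : ℤ → ℕ)
    (hbneg : ∀ m : ℤ, m < 0 → b m = 0) (hb0 : b 0 = 1)
    (hbcard : ∀ m : ℕ, 1 ≤ m → b m = Nat.card {w : List (Fin q) //
      w.length = m ∧ ¬ ∃ c ∈ 𝒥, c <:+: w}) :
    (∀ m : ℤ, (h : ℤ) ≤ m →
        (q : ℤ) * b (m - 1) - b m = ∑ i ∈ Finset.Icc h n, (b (m - i) : ℤ) * Jc i) ∧
      (∀ m : ℕ, m < h → b m = q ^ m) := by
  have hshort : ∀ k < h, avoidingWords 𝒥 k = {w | w.length = k} := fun k hk =>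
    avoidingWords_eq_of_forall_lt fun c hc => hk.trans_le (hlen c hc).1
  have hb : ∀ k : ℕ, b k = Nat.card (avoidingWords 𝒥 k) := by
    rintro (_ | k)
    · rw [Nat.cast_zero, hb0, hshort 0 (by omega), card_setOf_length_eq, pow_zero]
    · exact hbcard (k + 1) (by omega)
  have hJ : ∀ i, Jc i = Nat.card (codewordsOfLength 𝒥 i) := hJc
  have hJ_eq_zero : ∀ i ∉ Icc h n, Jc i = 0 := fun i hi => by
    rw [hJ, Nat.card_eq_zero]
    exact Or.inl ⟨fun ⟨c, hc, hci⟩ => hi (mem_Icc.mpr (hci ▸ hlen c hc))⟩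
  refine ⟨fun m hm => ?_, fun k hk => ?_⟩
  · obtain ⟨k, rfl⟩ : ∃ k : ℕ, m = ((k + 1 : ℕ) : ℤ) := ⟨(m - 1).toNat, by omega⟩
    have hrec := hno.card_avoidingWords_mul_card k
    rw [Finset.Nat.sum_antidiagonal_eq_sum_range_succ_mk] at hrec
    simp only [← hb, ← hJ, Nat.card_eq_fintype_card, Fintype.card_fin] at hrec
    rw [sum_Icc_mul_eq_sum_range hbneg hJ_eq_zero,
      show ((k + 1 : ℕ) : ℤ) - 1 = k by push_cast; ring]
    have := congrArg (Nat.cast : ℕ → ℤ) hrec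
    push_cast at this ⊢
    linarith
  · rw [hb, hshort k hk, card_setOf_length_eq, Fintype.card_fin]

/-- Let `b m` be the number of words of length `m` over `ℤ_q` containing
no codeword of the variable-length non-overlapping code `𝒥 = ⋃_{i=h}^n J(i)` as a
subword, with `b 0 = 1` and `b m = 0` for `m < 0`. Then for all `m ≥ h`,
`q·b (m-1) - b m = ∑_{i=h}^n b (m-i)·|J(i)|`, and `b m = q^m` for `0 ≤ m < h`. -/
theorem stmt15 (q h n : ℕ) (hq : 2 ≤ q) (hh : 2 ≤ h) (hhn : h ≤ n)
    (𝒥 : Set (List (Fin q))) (hlen : ∀ w ∈ 𝒥, h ≤ w.length ∧ w.length ≤ n)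
    (hno : NonOverlapping 𝒥)
    (Jc : ℕ → ℕ) (hJc : ∀ i : ℕ, Jc i = Nat.card {w : List (Fin q) // w ∈ 𝒥 ∧ w.length = i})
    (b : ℤ → ℕ)
    (hbneg : ∀ m : ℤ, m < 0 → b m = 0) (hb0 : b 0 = 1)
    (hbcard : ∀ m : ℕ, 1 ≤ m → b m = Nat.card {w : List (Fin q) //
      w.length = m ∧ ¬ ∃ c ∈ 𝒥, c <:+: w}) :
    (∀ m : ℤ, (h : ℤ) ≤ m →
        (q : ℤ) * b (m - 1) - b m = ∑ i ∈ Finset.Icc h n, (b (m - i) : ℤ) * Jc i) ∧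
      (∀ m : ℕ, m < h → b m = q ^ m) :=
  stmt15_general q h n hh 𝒥 hlen hno Jc hJc b hbneg hb0 hbcard
end

section
/- Let \mathcal{J} = \bigcup_{i=h}^n J(i) be a q-ary non-overlapping code with 2 \le h \le n, and let b(m) count length-m words avoiding all codewords of \mathcal{J} as subwords. Then for any 1 \le m < h, |J(n)| < q^n/(m+n) - q^{-m} \sum_{i=h}^{n-1} b(m+n-i) \cdot |J(i)|. -/
open List

namespace NonOverlapping

variable {α : Type*} {S : Set (List α)}

theorem eq_of_prefix_of_prefix (hS : NonOverlapping S) {c c' w : List α} (hc : c ∈ S)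
    (hc' : c' ∈ S) (h : c <+: w) (h' : c' <+: w) : c = c' := by
  by_contra hne
  rcases prefix_or_prefix_of_prefix h h' with hp | hp
  · exact hS.2 c' hc' c hc (Ne.symm hne) hp.isInfix
  · exact hS.2 c hc c' hc' hne hp.isInfix

theorem not_prefix_drop_append (hS : NonOverlapping S) {c c' : List α} (hc : c ∈ S)
    (hc' : c' ∈ S) {s : ℕ} (hs0 : 0 < s) (hs : s < c.length) (w : List α) :
    ¬ c' <+: c.drop s ++ w := by
  intro h
  have hlen : (c.drop s).length = c.length - s := length_drop
  rcases le_or_gt c'.length (c.drop s).length with hle | hlt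
  · have hinf : c' <:+: c :=
      (prefix_of_prefix_length_le h (prefix_append _ _) hle).isInfix.trans
        (drop_suffix s c).isInfix
    exact hS.2 c hc c' hc' (by rintro rfl; omega) hinf
  · refine hS.1 c' hc' c hc (c.drop s) ?_ ?_ ?_
      (prefix_of_prefix_length_le (prefix_append _ _) h hlt.le) (drop_suffix s c)
    · intro h0; rw [h0, length_nil] at hlen; omega
    · rintro rfl; omega
    · intro heq; have := congrArg length heq; omega

theorem replicate_notMem (hS : NonOverlapping S) {k : ℕ} (hk : 2 ≤ k) (a : α) :
    replicate k a ∉ S := by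
  intro hmem
  obtain ⟨k, rfl⟩ : ∃ l, k = l + 2 := ⟨k - 2, by omega⟩
  refine hS.1 _ hmem _ hmem [a] (by simp) ?_ ?_ ⟨replicate (k + 1) a, rfl⟩
    ⟨replicate (k + 1) a, replicate_succ'.symm⟩ <;>
  · intro h; simpa using congrArg length h

theorem eq_zero_of_append_eq_rotate (hS : NonOverlapping S) {c c' u u' : List α}
    (hc : c ∈ S) (hc' : c' ∈ S) (hu' : ¬ ∃ x ∈ S, x <:+: u') {s : ℕ}
    (hs : s < (c ++ u).length) (h : c' ++ u' = (c ++ u).rotate s) : s = 0 := by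
  by_contra hs0
  replace hs0 : 0 < s := Nat.pos_of_ne_zero hs0
  rcases lt_or_ge s c.length with hsc | hcs
  · rw [rotate_eq_drop_append_take hs.le, drop_append_of_le_length hsc.le,
      take_append_of_le_length hsc.le, append_assoc] at h
    exact not_prefix_drop_append hS hc hc' hs0 hsc _ (h ▸ prefix_append c' u')
  · set r := (c ++ u).length - s with hr
    have hlen : (c' ++ u').length = (c ++ u).length := by rw [h, length_rotate]
    have hback : c ++ u = (c' ++ u').rotate r := by
      rw [h, rotate_rotate, Nat.add_sub_cancel' hs.le, rotate_length]
    rcases lt_or_ge r c'.length with hrc | hcr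
    · rw [rotate_eq_drop_append_take (by omega), drop_append_of_le_length hrc.le,
        append_assoc] at hback
      exact not_prefix_drop_append hS hc' hc (by omega) hrc _ (hback ▸ prefix_append c u)
    · rw [rotate_eq_drop_append_take (by omega), drop_append, drop_eq_nil_of_le hcr,
        nil_append] at hback
      have hpre : c <+: u'.drop (r - c'.length) :=
        prefix_of_prefix_length_le (hback ▸ prefix_append c u) (prefix_append _ _)
          (by simp only [length_drop, length_append] at hlen hr ⊢; omega)
      exact hu' ⟨c, hc, hpre.isInfix.trans (drop_suffix _ _).isInfix⟩

theorem rotate_append_inj (hS : NonOverlapping S) {c c' u u' : List α} (hc : c ∈ S)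
    (hc' : c' ∈ S) (hu : ¬ ∃ x ∈ S, x <:+: u) (hu' : ¬ ∃ x ∈ S, x <:+: u') {j j' : ℕ}
    (hj : j < (c ++ u).length) (hj' : j' < (c' ++ u').length)
    (h : (c ++ u).rotate j = (c' ++ u').rotate j') : c = c' ∧ u = u' ∧ j = j' := by
  wlog hle : j' ≤ j generalizing c c' u u' j j'
  · obtain ⟨rfl, rfl, rfl⟩ := this hc' hc hu' hu hj' hj h.symm (by omega)
    exact ⟨rfl, rfl, rfl⟩
  have hrot : (c ++ u).rotate (j - j') = c' ++ u' := by
    rw [← rotate_eq_rotate (n := j'), rotate_rotate, Nat.sub_add_cancel hle, h]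
  have hjj : j - j' = 0 := eq_zero_of_append_eq_rotate hS hc hc' hu' (by omega) hrot.symm
  rw [hjj, rotate_zero] at hrot
  obtain rfl := eq_of_prefix_of_prefix hS hc hc' (hrot ▸ prefix_append c u) (prefix_append c' u')
  exact ⟨rfl, append_cancel_left hrot, by omega⟩

theorem rotate_append_ne_replicate (hS : NonOverlapping S) {c : List α} (hc : c ∈ S)
    (h2 : 2 ≤ c.length) (u : List α) (j k : ℕ) (a : α) :
    (c ++ u).rotate j ≠ replicate k a := by
  intro h
  rw [rotate_eq_iff, rotate_replicate, append_eq_replicate_iff] at h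
  exact replicate_notMem hS h2 a (h.2.1 ▸ hc)

end NonOverlapping

section Counting

variable {α : Type*} {S : Set (List α)}

theorem finite_subtype_of_length_eq [Finite α] {P : List α → Prop} {n : ℕ}
    (hP : ∀ w, P w → w.length = n) : Finite {w : List α // P w} :=
  ((finite_length_eq α n).subset hP).to_subtype

instance finite_codewords_length_eq [Finite α] (i : ℕ) :
    Finite {c // c ∈ S ∧ c.length = i} :=
  finite_subtype_of_length_eq fun _ => And.right

instance finite_codewordFree_length_eq [Finite α] (k : ℕ) :
    Finite {u : List α // u.length = k ∧ ¬ ∃ c ∈ S, c <:+: u} :=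
  finite_subtype_of_length_eq fun _ => And.left

variable [Fintype α]

theorem card_subtype_length_eq (n : ℕ) :
    Nat.card {w : List α // w.length = n} = Fintype.card α ^ n :=
  (Nat.card_eq_fintype_card (α := List.Vector α n)).trans (card_vector n)

theorem card_codewordFree_of_lt_length {m : ℕ} (h : ∀ c ∈ S, m < c.length) :
    Nat.card {u : List α // u.length = m ∧ ¬ ∃ c ∈ S, c <:+: u} = Fintype.card α ^ m := by
  rw [← card_subtype_length_eq]
  refine Nat.card_congr (Equiv.subtypeEquivRight fun u => and_iff_left_of_imp ?_)
  rintro hu ⟨c, hc, hcu⟩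
  have := hcu.length_le
  have := h c hc
  omega

variable (S) in
def Placement (I : Finset ℕ) (N : ℕ) : Type _ :=
  Σ i : I, {c // c ∈ S ∧ c.length = i} × Fin N ×
    {u : List α // u.length = N - i ∧ ¬ ∃ c ∈ S, c <:+: u}

instance (I : Finset ℕ) (N : ℕ) : Finite (Placement S I N) := by
  unfold Placement; infer_instance

variable (S) in
theorem Placement.card (I : Finset ℕ) (N : ℕ) :
    Nat.card (Placement S I N) = N * ∑ i ∈ I, Nat.card {c // c ∈ S ∧ c.length = i} *
      Nat.card {u : List α // u.length = N - i ∧ ¬ ∃ c ∈ S, c <:+: u} := by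
  rw [Placement, Nat.card_sigma, Finset.mul_sum, ← Finset.sum_coe_sort I]
  refine Finset.sum_congr rfl fun i _ => ?_
  rw [Nat.card_prod, Nat.card_prod, Nat.card_fin]
  ring

theorem NonOverlapping.mul_sum_card_add_one_le [Inhabited α] (hS : NonOverlapping S)
    (h2 : ∀ c ∈ S, 2 ≤ c.length) {I : Finset ℕ} {N : ℕ} (hI : ∀ i ∈ I, i ≤ N) :
    N * ∑ i ∈ I, Nat.card {c // c ∈ S ∧ c.length = i} *
      Nat.card {u : List α // u.length = N - i ∧ ¬ ∃ c ∈ S, c <:+: u} + 1 ≤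
        Fintype.card α ^ N := by
  have hlen (p : Placement S I N) : (p.2.1.1 ++ p.2.2.2.1).length = N := by
    rw [length_append, p.2.1.2.2, p.2.2.2.2.1, Nat.add_sub_cancel' (hI _ p.1.2)]
  let f : Option (Placement S I N) → {w : List α // w.length = N}
    | none => ⟨replicate N default, length_replicate⟩
    | some p => ⟨(p.2.1.1 ++ p.2.2.2.1).rotate p.2.2.1, (length_rotate ..).trans (hlen p)⟩
  have hf : Function.Injective f := by
    rintro (_ | ⟨i, c, j, u⟩) (_ | ⟨i', c', j', u'⟩) h <;>
      simp only [f, Subtype.mk.injEq] at h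
    · rfl
    · exact absurd h.symm (hS.rotate_append_ne_replicate c'.2.1 (h2 _ c'.2.1) _ _ _ _)
    · exact absurd h (hS.rotate_append_ne_replicate c.2.1 (h2 _ c.2.1) _ _ _ _)
    · obtain ⟨hc, hu, hj⟩ := hS.rotate_append_inj c.2.1 c'.2.1 u.2.2 u'.2.2
        (j.2.trans_eq (hlen ⟨i, c, j, u⟩).symm) (j'.2.trans_eq (hlen ⟨i', c', j', u'⟩).symm) h
      obtain rfl : i = i' := Subtype.ext (c.2.2.symm.trans (hc ▸ c'.2.2))
      obtain rfl := Subtype.ext hc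
      obtain rfl := Subtype.ext hu
      obtain rfl := Fin.ext hj
      rfl
  have : Finite {w : List α // w.length = N} := finite_subtype_of_length_eq fun _ => id
  have := Nat.card_le_card_of_injective f hf
  rwa [Finite.card_option, Placement.card, card_subtype_length_eq] at this

end Counting

theorem stmt16_general (q h n : ℕ) (hq : 2 ≤ q) (hh : 2 ≤ h) (hhn : h ≤ n)
    (𝒥 : Set (List (Fin q)))
    (hlen : ∀ w ∈ 𝒥, h ≤ w.length ∧ w.length ≤ n)
    (hno : NonOverlapping 𝒥)
    (Jc : ℕ → ℕ) (hJc : ∀ i : ℕ, Jc i = Nat.card {w : List (Fin q) // w ∈ 𝒥 ∧ w.length = i})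
    (b : ℕ → ℕ)
    (hbcard : ∀ m : ℕ, b m = Nat.card {w : List (Fin q) //
      w.length = m ∧ ¬ ∃ c ∈ 𝒥, c <:+: w}) :
    ∀ m : ℕ, 1 ≤ m → m < h →
      (Jc n : ℝ) < (q : ℝ) ^ n / (m + n)
        - (1 / (q : ℝ) ^ m) * ∑ i ∈ Finset.Ico h n, (b (m + n - i) : ℝ) * Jc i := by
  intro m hm hmh
  have : NeZero q := ⟨by omega⟩
  have hcount := hno.mul_sum_card_add_one_le (I := Finset.Icc h n) (N := m + n)
    (fun c hc => hh.trans (hlen c hc).1) (fun i hi => (Finset.mem_Icc.mp hi).2.trans (by omega))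
  rw [← Finset.Ico_add_one_right_eq_Icc, Finset.sum_Ico_succ_top hhn, Nat.add_sub_cancel,
    card_codewordFree_of_lt_length fun c hc => hmh.trans_le (hlen c hc).1, Fintype.card_fin]
    at hcount
  simp only [← hJc, ← hbcard] at hcount
  set A := ∑ i ∈ Finset.Ico h n, (b (m + n - i) : ℝ) * Jc i
  have hcountR : ((m : ℝ) + n) * (A + Jc n * q ^ m) + 1 ≤ q ^ n * q ^ m := by
    have := (Nat.cast_le (α := ℝ)).mpr hcount
    push_cast at this
    simpa only [A, mul_comm, pow_add] using this
  have hpos : 0 < ((q : ℝ) ^ n * q ^ m - (m + n) * (A + Jc n * q ^ m)) / ((m + n) * q ^ m) :=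
    div_pos (by linarith) (by positivity)
  have hid : (q : ℝ) ^ n / (m + n) - 1 / (q : ℝ) ^ m * A - Jc n =
      ((q : ℝ) ^ n * q ^ m - (m + n) * (A + Jc n * q ^ m)) / ((m + n) * q ^ m) := by
    field_simp
    ring
  linarith

/-- Let `𝒥 = ⋃_{i=h}^n J(i)` be a nonempty `q`-ary non-overlapping code
with `2 ≤ h ≤ n`, and let `b m` count length-`m` words avoiding all codewords of `𝒥` as
subwords. Then for any `1 ≤ m < h`,
`|J(n)| < qⁿ/(m+n) - q^{-m} ∑_{i=h}^{n-1} b (m+n-i)·|J(i)|`. -/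
theorem stmt16 (q h n : ℕ) (hq : 2 ≤ q) (hh : 2 ≤ h) (hhn : h ≤ n)
    (𝒥 : Set (List (Fin q))) (h𝒥 : 𝒥.Nonempty)
    (hlen : ∀ w ∈ 𝒥, h ≤ w.length ∧ w.length ≤ n)
    (hno : NonOverlapping 𝒥)
    (Jc : ℕ → ℕ) (hJc : ∀ i : ℕ, Jc i = Nat.card {w : List (Fin q) // w ∈ 𝒥 ∧ w.length = i})
    (b : ℕ → ℕ)
    (hbcard : ∀ m : ℕ, b m = Nat.card {w : List (Fin q) //
      w.length = m ∧ ¬ ∃ c ∈ 𝒥, c <:+: w}) :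
    ∀ m : ℕ, 1 ≤ m → m < h →
      (Jc n : ℝ) < (q : ℝ) ^ n / (m + n)
        - (1 / (q : ℝ) ^ m) * ∑ i ∈ Finset.Ico h n, (b (m + n - i) : ℝ) * Jc i :=
  stmt16_general q h n hq hh hhn 𝒥 hlen hno Jc hJc b hbcard
end

section
/- Any fixed-length non-overlapping code S \subseteq \mathbb{Z}_q^n (with n, q \ge 2) satisfies |S| < q^n/(2n-1). -/
/-! Place a codeword at any of the `L = 2n - 1` positions of a cyclic word of length `L`
and fill the remaining `n - 1` letters arbitrarily. Two occurrences of codewords in a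
cyclic word this short would overlap, so the cyclic word determines the codeword, its
position and the filler; and the constant word contains no codeword, since a codeword never
begins and ends with the same letter. Hence `|S| · L · q^(n-1) < q^L = qⁿ · q^(n-1)`. -/

open List

variable {α : Type*}

def IsNonOverlapping (S : Set (List α)) : Prop :=
  ∀ u ∈ S, ∀ v ∈ S, ∀ p : List α, p ≠ [] → p ≠ u → p ≠ v → p <+: u → ¬ p <:+ v

def OccursAt {G : Type*} [AddMonoidWithOne G] (c : G → α) (w : List α) (i : G) : Prop :=
  ∀ k (hk : k < w.length), c (i + k) = w[k]

namespace OccursAt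

variable {G : Type*} [AddMonoidWithOne G] {c : G → α} {u v : List α} {i : G}

theorem drop_eq_take {e : ℕ} (hu : OccursAt c u i) (hv : OccursAt c v (i + e))
    (hle : u.length - e ≤ v.length) : u.drop e = v.take (u.length - e) := by
  refine ext_getElem (by simp; omega) fun k hk _ => ?_
  have hk' : k < u.length - e := by simpa using hk
  rw [getElem_drop, getElem_take, ← hu _ (by omega), ← hv _ (by omega), Nat.cast_add, add_assoc]

theorem eq_of_length_eq (hu : OccursAt c u i) (hv : OccursAt c v i)
    (hlen : u.length = v.length) : u = v :=
  ext_getElem hlen fun k hk hk' => by rw [← hu k hk, ← hv k hk']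

theorem eq_replicate_of_const {a : α} (h : OccursAt (fun _ => a) u i) :
    u = replicate u.length a := by
  refine eq_replicate_iff.mpr ⟨rfl, fun b hb => ?_⟩
  obtain ⟨k, hk, rfl⟩ := mem_iff_getElem.mp hb
  exact (h k hk).symm

end OccursAt

def cyclicWord [Inhabited α] {L : ℕ} (l : List α) (i : ZMod L) : ZMod L → α :=
  fun x => l.getD (x - i).val default

section cyclicWord

variable [Inhabited α] {L : ℕ}

theorem cyclicWord_add_natCast (l : List α) (i : ZMod L) {k : ℕ} (hk : k < L) :
    cyclicWord l i (i + k) = l.getD k default := by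
  simp [cyclicWord, ZMod.val_natCast_of_lt hk]

theorem occursAt_cyclicWord {w l : List α} (hwl : w <+: l) (hl : l.length ≤ L) (i : ZMod L) :
    OccursAt (cyclicWord l i) w i := fun k hk => by
  have hkl : k < l.length := hk.trans_le hwl.length_le
  rw [cyclicWord_add_natCast l i (hkl.trans_le hl), getD_eq_getElem l _ hkl, hwl.getElem hk]

theorem cyclicWord_injective {l l' : List α} (hl : l.length = L) (hl' : l'.length = L)
    (i : ZMod L) (h : cyclicWord l i = cyclicWord l' i) : l = l' :=
  ext_getElem (hl.trans hl'.symm) fun k hk hk' => by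
    have := congrFun h (i + k)
    rwa [cyclicWord_add_natCast _ _ (hl ▸ hk), cyclicWord_add_natCast _ _ (hl ▸ hk),
      getD_eq_getElem _ _ hk, getD_eq_getElem _ _ hk'] at this

end cyclicWord

def cyclicEncode [Inhabited α] (S : Set (List α)) (n L : ℕ) :
    S × ZMod L × (Fin (L - n) → α) → (ZMod L → α) :=
  fun a => cyclicWord (a.1.1 ++ ofFn a.2.2) a.2.1

namespace IsNonOverlapping

variable {S : Set (List α)} {n : ℕ}

theorem drop_ne_take (hS : IsNonOverlapping S) {u v : List α} (hu : u ∈ S) (hv : v ∈ S)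
    (hul : u.length = n) (hvl : v.length = n) {e : ℕ} (he0 : 0 < e) (hen : e < n) :
    u.drop e ≠ v.take (n - e) := by
  intro h
  have hlen : (u.drop e).length = n - e := by simp [hul]
  refine hS v hv u hu (u.drop e) ?_ ?_ ?_ (h ▸ take_prefix _ _) (drop_suffix _ _)
  · exact ne_nil_of_length_pos (by omega)
  · exact fun h' => by have := congrArg length h'; omega
  · exact fun h' => by have := congrArg length h'; omega

theorem replicate_notMem (hS : IsNonOverlapping S) (hn : 2 ≤ n) (a : α) :
    replicate n a ∉ S := by
  intro h
  obtain ⟨m, rfl⟩ : ∃ m, n = m + 2 := ⟨n - 2, by omega⟩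
  have hne : [a] ≠ replicate (m + 2) a := fun h' => by simpa using congrArg length h'
  refine hS _ h _ h [a] (cons_ne_nil _ _) hne hne ?_ ?_
  · rw [replicate_succ]
    exact prefix_cons_inj a |>.mpr nil_prefix
  · rw [replicate_succ']
    exact suffix_append _ _

theorem not_occursAt_add {G : Type*} [AddMonoidWithOne G] (hS : IsNonOverlapping S)
    {u v : List α} (hu : u ∈ S) (hv : v ∈ S) (hul : u.length = n) (hvl : v.length = n)
    {c : G → α} {i : G} {e : ℕ} (he0 : 0 < e) (hen : e < n)
    (hci : OccursAt c u i) (hce : OccursAt c v (i + e)) : False :=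
  hS.drop_ne_take hu hv hul hvl he0 hen (hul ▸ hci.drop_eq_take hce (by omega))

/-- Two occurrences at distinct positions of a cycle of length `L < 2n` overlap on one side
or the other. -/
theorem eq_of_occursAt_zmod {L : ℕ} [NeZero L] (hS : IsNonOverlapping S) (hL : L < 2 * n)
    {u v : List α} (hu : u ∈ S) (hv : v ∈ S) (hul : u.length = n) (hvl : v.length = n)
    {c : ZMod L → α} {i j : ZMod L} (hci : OccursAt c u i) (hcj : OccursAt c v j) :
    u = v ∧ i = j := by
  suffices hij : i = j from ⟨hci.eq_of_length_eq (hij ▸ hcj) (hul.trans hvl.symm), hij⟩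
  by_contra hne
  set d := (j - i).val
  have hd0 : 0 < d := Nat.pos_of_ne_zero fun h =>
    hne (sub_eq_zero.mp ((ZMod.val_eq_zero _).mp h)).symm
  have hdL : d < L := ZMod.val_lt _
  have hj : j = i + (d : ZMod L) := by simp [d]
  rcases lt_or_ge d n with hdn | hdn
  · exact hS.not_occursAt_add hu hv hul hvl hd0 hdn hci (hj ▸ hcj)
  · have hi : i = j + ((L - d : ℕ) : ZMod L) := by
      rw [hj, add_assoc, ← Nat.cast_add, Nat.add_sub_cancel' hdL.le, ZMod.natCast_self, add_zero]
    exact hS.not_occursAt_add hv hu hvl hul (by omega) (by omega) hcj (hi ▸ hci)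

theorem cyclicEncode_injective [Inhabited α] {L : ℕ} [NeZero L] (hS : IsNonOverlapping S)
    (hlen : ∀ w ∈ S, w.length = n) (hnL : n ≤ L) (hL : L < 2 * n) :
    Function.Injective (cyclicEncode S n L) := by
  rintro ⟨⟨u, hu⟩, i, f⟩ ⟨⟨v, hv⟩, j, g⟩ h
  have hci := occursAt_cyclicWord (prefix_append u (ofFn f)) (by simp [hlen u hu, hnL]) i
  have hcj := occursAt_cyclicWord (prefix_append v (ofFn g)) (by simp [hlen v hv, hnL]) j
  obtain ⟨rfl, rfl⟩ := hS.eq_of_occursAt_zmod hL hu hv (hlen u hu) (hlen v hv)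
    hci (h ▸ hcj : OccursAt (cyclicEncode S n L ⟨⟨u, hu⟩, i, f⟩) v j)
  have hfg : u ++ ofFn f = u ++ ofFn g :=
    cyclicWord_injective (by simp [hlen u hu, hnL]) (by simp [hlen u hu, hnL]) i h
  rw [ofFn_injective (append_cancel_left hfg)]

theorem const_notMem_range_cyclicEncode [Inhabited α] {L : ℕ} (hS : IsNonOverlapping S)
    (hlen : ∀ w ∈ S, w.length = n) (hn : 2 ≤ n) (hnL : n ≤ L) :
    (fun _ => default) ∉ Set.range (cyclicEncode S n L) := by
  rintro ⟨⟨⟨w, hw⟩, i, f⟩, h⟩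
  have hocc := occursAt_cyclicWord (prefix_append w (ofFn f)) (by simp [hlen w hw, hnL]) i
  rw [show cyclicWord _ i = _ from h] at hocc
  exact hS.replicate_notMem hn default (hlen w hw ▸ hocc.eq_replicate_of_const ▸ hw)

theorem card_mul_lt [Finite α] [Nonempty α] (hS : IsNonOverlapping S)
    (hlen : ∀ w ∈ S, w.length = n) (hn : 2 ≤ n) {L : ℕ} (hnL : n ≤ L) (hL : L < 2 * n) :
    Nat.card S * L < Nat.card α ^ n := by
  inhabit α
  obtain ⟨m, rfl⟩ : ∃ m, L = n + m := ⟨L - n, by omega⟩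
  have : NeZero (n + m) := ⟨by omega⟩
  have : Fintype α := Fintype.ofFinite α
  have : Fintype S := ((finite_length_eq α n).subset hlen).fintype
  have hlt := Fintype.card_lt_of_injective_of_notMem _ (hS.cyclicEncode_injective hlen hnL hL)
    (hS.const_notMem_range_cyclicEncode hlen hn hnL)
  rw [← Nat.card_eq_fintype_card, ← Nat.card_eq_fintype_card] at hlt
  simp only [Nat.card_prod, Nat.card_fun, Nat.card_zmod, Nat.card_fin, Nat.add_sub_cancel_left,
    pow_add, ← mul_assoc] at hlt
  exact Nat.lt_of_mul_lt_mul_right hlt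

end IsNonOverlapping

/-- Any fixed-length non-overlapping code `S ⊆ ℤ_qⁿ` (with `n, q ≥ 2`)
satisfies `|S| < qⁿ/(2n-1)`. Non-overlapping: for all `u, v ∈ S`, no nonempty proper
prefix of `u` equals a nonempty proper suffix of `v` (including `u = v`). -/
theorem stmt17 (q n : ℕ) (hq : 2 ≤ q) (hn : 2 ≤ n)
    (S : Set (List (Fin q))) (hlen : ∀ w ∈ S, w.length = n)
    (hno : ∀ u ∈ S, ∀ v ∈ S, ∀ p : List (Fin q),
      p ≠ [] → p ≠ u → p ≠ v → p <+: u → ¬ p <:+ v) :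
    (Nat.card S : ℝ) < (q : ℝ) ^ n / (2 * n - 1) := by
  have : Nonempty (Fin q) := ⟨⟨0, by omega⟩⟩
  have key : Nat.card S * (2 * n - 1) < q ^ n := by
    simpa using IsNonOverlapping.card_mul_lt hno hlen hn (L := 2 * n - 1) (by omega) (by omega)
  have hpos : (0 : ℝ) < 2 * n - 1 := by
    have : (2 : ℝ) ≤ n := by exact_mod_cast hn
    linarith
  have hcast : ((2 * n - 1 : ℕ) : ℝ) = 2 * n - 1 := by
    push_cast [Nat.cast_sub (by omega : 1 ≤ 2 * n)]
    ring
  rw [lt_div_iff₀ hpos, ← hcast]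
  exact_mod_cast key
end

section
/- The q-ary code V_{I,J}^{(k)}(n) = J^k \times R^{(k)}(n-2k) \times I^k, together with the union \mathcal{V}_{I,J}^{(k)}(n) = \bigcup_{i=2k+2}^{n} V_{I,J}^{(k)}(i), is a variable-length non-overlapping code: no nonempty proper prefix of any codeword equals a nonempty proper suffix of any codeword, and no codeword contains another codeword as a subword. -/
variable {α : Type*}

theorem NonOverlapping.mono {S T : Set (List α)} (hST : S ⊆ T) (hT : NonOverlapping T) :
    NonOverlapping S :=
  ⟨fun u hu v hv => hT.1 u (hST hu) v (hST hv), fun u hu v hv => hT.2 u (hST hu) v (hST hv)⟩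

namespace NonOverlappingCode

def LetterIn (K : Set α) (w : List α) (i : ℕ) : Prop :=
  ∃ x ∈ K, w[i]? = some x

def IsRunAt (K : Set α) (w : List α) (a k : ℕ) : Prop :=
  ∀ j < k, LetterIn K w (a + j)

variable {I J K : Set α} {w x y u v p : List α} {i a b k : ℕ}

theorem take_drop_isInfix_take_drop (hba : b ≤ a) (hak : a + k ≤ b + i) :
    (w.drop a).take k <:+: (w.drop b).take i := by
  have h : (w.drop a).take k = (((w.drop b).take i).drop (a - b)).take k := by
    rw [List.drop_take, List.drop_drop, List.take_take, Nat.add_sub_cancel' hba]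
    congr 1
    omega
  exact h ▸ (List.take_prefix _ _).isInfix.trans (List.drop_suffix _ _).isInfix

theorem LetterIn.lt_length (h : LetterIn K w i) : i < w.length := by
  obtain ⟨_, _, hx⟩ := h
  exact (List.getElem?_eq_some_iff.1 hx).1

theorem LetterIn.not_letterIn (hd : Disjoint I J) (hI : LetterIn I w i) : ¬ LetterIn J w i := by
  rintro ⟨y, hy, hwy⟩
  obtain ⟨x, hx, hwx⟩ := hI
  rw [hwx, Option.some_inj] at hwy
  exact Set.disjoint_left.1 hd hx (hwy ▸ hy)

theorem letterIn_append_left_iff (hi : i < x.length) :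
    LetterIn K (x ++ y) i ↔ LetterIn K x i := by
  simp only [LetterIn, List.getElem?_append_left hi]

theorem letterIn_append_right_iff : LetterIn K (x ++ y) (x.length + i) ↔ LetterIn K y i := by
  simp only [LetterIn, List.getElem?_append_right (Nat.le_add_right _ _), Nat.add_sub_cancel_left]

theorem letterIn_take_drop_iff :
    LetterIn K ((w.drop a).take b) i ↔ i < b ∧ LetterIn K w (a + i) := by
  simp only [LetterIn, List.getElem?_take, List.getElem?_drop]
  split_ifs <;> simp [*]

theorem letterIn_of_forall_mem (hi : i < w.length) (h : ∀ x ∈ w, x ∈ K) : LetterIn K w i :=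
  ⟨w[i], h _ (List.getElem_mem hi), List.getElem?_eq_getElem hi⟩

theorem letterIn_of_getD_mem {d : α} (hi : i < w.length) (h : w.getD i d ∈ K) :
    LetterIn K w i :=
  ⟨_, h, by rw [List.getD_eq_getElem _ _ hi, List.getElem?_eq_getElem hi]⟩

theorem IsRunAt.add_le_length (h : IsRunAt K w a k) (hk : 0 < k) : a + k ≤ w.length := by
  have := (h (k - 1) (by omega)).lt_length
  omega

theorem isRunAt_append_left_iff (h : a + k ≤ x.length) :
    IsRunAt K (x ++ y) a k ↔ IsRunAt K x a k :=
  forall₂_congr fun _ _ => letterIn_append_left_iff (by omega)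

theorem isRunAt_append_right_iff : IsRunAt K (x ++ y) (x.length + a) k ↔ IsRunAt K y a k :=
  forall₂_congr fun j _ => by rw [Nat.add_assoc, letterIn_append_right_iff]

theorem isRunAt_of_forall_mem_take_drop (h : a + k ≤ w.length)
    (hK : ∀ x ∈ (w.drop a).take k, x ∈ K) : IsRunAt K w a k := fun j hj =>
  (letterIn_take_drop_iff.1 (letterIn_of_forall_mem (by simp; omega) hK)).2

theorem IsRunAt.forall_mem_take_drop (h : IsRunAt K w a k) :
    ∀ x ∈ (w.drop a).take k, x ∈ K := by
  intro x hx
  obtain ⟨j, hj⟩ := List.mem_iff_getElem?.1 hx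
  have ⟨hjk, hwx⟩ : j < k ∧ w[a + j]? = some x := by
    simpa [List.getElem?_take, List.getElem?_drop] using hj
  obtain ⟨y, hy, hwy⟩ := h j hjk
  rw [hwx, Option.some_inj] at hwy
  exact hwy ▸ hy

/-- The words `J^k r I^k` with `r ∈ R^{(k)}(m - 2k)`, `m = w.length`, in positional form:
`r` occupies the positions `k, …, m - k - 1`. -/
structure IsCodeword (I J : Set α) (k : ℕ) (w : List α) : Prop where
  head : IsRunAt J w 0 k
  tail : IsRunAt I w (w.length - k) k
  letterIn_k : LetterIn I w k
  letterIn_length_sub : LetterIn J w (w.length - k - 1)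
  not_isRunAt_I : ∀ a, k ≤ a → a + k ≤ w.length - k → ¬ IsRunAt I w a k
  not_isRunAt_J : ∀ a, k ≤ a → a + k ≤ w.length - k → ¬ IsRunAt J w a k

namespace IsCodeword

theorem pos (hw : IsCodeword I J k w) : 0 < k := by
  by_contra! hk
  obtain rfl : k = 0 := by omega
  exact hw.not_isRunAt_I 0 le_rfl (by omega) fun j hj => absurd hj (Nat.not_lt_zero j)

theorem le_length (hw : IsCodeword I J k w) : k ≤ w.length := by
  simpa using hw.head.add_le_length hw.pos

theorem eq_zero_of_isRunAt_J (hd : Disjoint I J) (hw : IsCodeword I J k w)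
    (h : IsRunAt J w a k) : a = 0 := by
  have hk := hw.pos
  have hlen := h.add_le_length hk
  by_contra ha
  rcases le_or_gt a k with hak | hak
  · refine hw.letterIn_k.not_letterIn hd ?_
    simpa [show a + (k - a) = k by omega] using h (k - a) (by omega)
  rcases le_or_gt (a + k) (w.length - k) with hmid | hend
  · exact hw.not_isRunAt_J a hak.le hmid h
  · refine (hw.tail 0 hk).not_letterIn hd ?_
    simpa [show a + (w.length - k - a) = w.length - k by omega] using
      h (w.length - k - a) (by omega)

theorem eq_of_isRunAt_I (hd : Disjoint I J) (hw : IsCodeword I J k w)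
    (h : IsRunAt I w a k) : a = w.length - k := by
  have hk := hw.pos
  have hlen := h.add_le_length hk
  by_contra ha
  rcases lt_or_ge a k with hak | hak
  · exact (h 0 hk).not_letterIn hd (by simpa using hw.head a hak)
  rcases le_or_gt (a + k) (w.length - k) with hmid | hend
  · exact hw.not_isRunAt_I a hak hmid h
  · refine (h (w.length - k - 1 - a) (by omega)).not_letterIn hd ?_
    simpa [show a + (w.length - k - 1 - a) = w.length - k - 1 by omega] using
      hw.letterIn_length_sub

theorem eq_of_isInfix (hd : Disjoint I J) (hu : IsCodeword I J k u) (hv : IsCodeword I J k v)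
    (h : v <:+: u) : v = u := by
  obtain ⟨s, t, rfl⟩ := h
  have hk := hv.pos
  have hkv := hv.le_length
  have hs : s.length = 0 := by
    refine hu.eq_zero_of_isRunAt_J hd ?_
    have hvt : IsRunAt J (v ++ t) 0 k := (isRunAt_append_left_iff (by omega)).2 hv.head
    simpa using (isRunAt_append_right_iff (x := s) (a := 0)).2 hvt
  have ht : s.length + (v.length - k) = (s ++ v ++ t).length - k := by
    refine hu.eq_of_isRunAt_I hd ?_
    rw [isRunAt_append_left_iff (by simp; omega), isRunAt_append_right_iff]
    exact hv.tail
  simp only [List.length_append] at ht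
  rw [List.length_eq_zero_iff.1 hs, List.length_eq_zero_iff.1 (by omega : t.length = 0)]
  simp

theorem not_isSuffix_of_isPrefix (hd : Disjoint I J) (hu : IsCodeword I J k u)
    (hv : IsCodeword I J k v) (hp : p ≠ []) (hpv : p ≠ v) (hpu : p <+: u) : ¬ p <:+ v := by
  rintro ⟨s, rfl⟩
  obtain ⟨t, rfl⟩ := hpu
  have hk := hu.pos
  have hp0 : 0 < p.length := List.length_pos_iff.2 hp
  have hs0 : s.length ≠ 0 := fun hs => hpv (by simp [List.length_eq_zero_iff.1 hs])
  rcases le_or_gt p.length k with hpk | hkp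
  · have hJ : LetterIn J (s ++ p) (s.length + 0) :=
      letterIn_append_right_iff.2 ((letterIn_append_left_iff hp0).1 (hu.head 0 hk))
    have hI := hv.tail (k - p.length) (by omega)
    have hkv := hv.le_length
    rw [List.length_append] at hI hkv
    rw [show s.length + p.length - k + (k - p.length) = s.length by omega] at hI
    exact hJ.not_letterIn hd.symm (by simpa using hI)
  · refine hs0 (hv.eq_zero_of_isRunAt_J hd ?_)
    have hp : IsRunAt J p 0 k := (isRunAt_append_left_iff (y := t) (by omega)).1 hu.head
    simpa using (isRunAt_append_right_iff (x := s) (a := 0)).2 hp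

end IsCodeword

theorem nonOverlapping_setOf_isCodeword (hd : Disjoint I J) :
    NonOverlapping {w | IsCodeword I J k w} :=
  ⟨fun _ hu _ hv _ hp _ hpv hpu => hu.not_isSuffix_of_isPrefix hd hv hp hpv hpu,
    fun _ hu _ hv hne h => hne (hu.eq_of_isInfix hd hv h).symm⟩

theorem not_isRunAt_of_not_exists_isInfix (ha : k ≤ a) (hak : a + k ≤ w.length - k)
    (hno : ¬ ∃ v : List α, v.length = k ∧ (∀ x ∈ v, x ∈ K) ∧
      v <:+: (w.drop k).take (w.length - 2 * k)) :
    ¬ IsRunAt K w a k := fun h =>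
  hno ⟨(w.drop a).take k, by simp; omega, h.forall_mem_take_drop,
    take_drop_isInfix_take_drop ha (by omega)⟩

theorem isCodeword_of_slice {d : α} (hlen : 2 * k + 2 ≤ w.length)
    (hhead : ∀ x ∈ w.take k, x ∈ J) (htail : ∀ x ∈ w.drop (w.length - k), x ∈ I)
    (hfirst : ((w.drop k).take (w.length - 2 * k)).getD 0 d ∈ I)
    (hlast : ((w.drop k).take (w.length - 2 * k)).getD (w.length - 2 * k - 1) d ∈ J)
    (hnoI : ¬ ∃ v : List α, v.length = k ∧ (∀ x ∈ v, x ∈ I) ∧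
      v <:+: (w.drop k).take (w.length - 2 * k))
    (hnoJ : ¬ ∃ v : List α, v.length = k ∧ (∀ x ∈ v, x ∈ J) ∧
      v <:+: (w.drop k).take (w.length - 2 * k)) :
    IsCodeword I J k w where
  head := isRunAt_of_forall_mem_take_drop (by omega) (by simpa using hhead)
  tail := isRunAt_of_forall_mem_take_drop (by omega)
    fun x hx => htail x (List.mem_of_mem_take hx)
  letterIn_k := by
    simpa using (letterIn_take_drop_iff.1 (letterIn_of_getD_mem (by simp; omega) hfirst)).2
  letterIn_length_sub := by
    have h := (letterIn_take_drop_iff.1 (letterIn_of_getD_mem (by simp; omega) hlast)).2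
    rwa [show k + (w.length - 2 * k - 1) = w.length - k - 1 by omega] at h
  not_isRunAt_I a ha hak := not_isRunAt_of_not_exists_isInfix ha hak hnoI
  not_isRunAt_J a ha hak := not_isRunAt_of_not_exists_isInfix ha hak hnoJ

end NonOverlappingCode

/-- The `q`-ary code `𝒱_{I,J}^{(k)}(n) = ⋃_{i=2k+2}^n V_{I,J}^{(k)}(i)`,
where `V_{I,J}^{(k)}(i) = J^k × R^{(k)}(i-2k) × I^k` and `R^{(k)}(l)` is the set of
words of length `l` starting in `I`, ending in `J`, with no `k` consecutive letters
from `I` and no `k` consecutive letters from `J`, is a variable-length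
non-overlapping code. -/
theorem stmt18 (q n k : ℕ) (hq : 2 ≤ q)
    (I J : Set (Fin q)) (hd : Disjoint I J) :
    NonOverlapping {w : List (Fin q) |
      2 * k + 2 ≤ w.length ∧ w.length ≤ n ∧
      (∀ x ∈ w.take k, x ∈ J) ∧
      (∀ x ∈ w.drop (w.length - k), x ∈ I) ∧
      ((w.drop k).take (w.length - 2 * k)).getD 0 ⟨0, by omega⟩ ∈ I ∧
      ((w.drop k).take (w.length - 2 * k)).getD (w.length - 2 * k - 1) ⟨0, by omega⟩ ∈ J ∧
      (¬ ∃ v : List (Fin q), v.length = k ∧ (∀ a ∈ v, a ∈ I) ∧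
        v <:+: (w.drop k).take (w.length - 2 * k)) ∧
      (¬ ∃ v : List (Fin q), v.length = k ∧ (∀ a ∈ v, a ∈ J) ∧
        v <:+: (w.drop k).take (w.length - 2 * k))} :=
  (NonOverlappingCode.nonOverlapping_setOf_isCodeword hd).mono
    fun _ ⟨hlen, _, hhead, htail, hfirst, hlast, hnoI, hnoJ⟩ =>
      NonOverlappingCode.isCodeword_of_slice hlen hhead htail hfirst hlast hnoI hnoJ
end

section
/- For a non-overlapping code \mathcal{J} = \bigcup_{i=h}^n J(i) over \mathbb{Z}_q and 1 \le m < h, the number of words of length m+n over \mathbb{Z}_q that contain exactly one occurrence of a codeword from \mathcal{J} as a cyclic subword equals \sum_{i=h}^{n} (m+n) \cdot b(m+n-i) \cdot |J(i)|, where b(j) counts length-j words avoiding all codewords of \mathcal{J} as (linear) subwords. -/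
/-!
Rotate a word with a unique cyclic occurrence so that the occurrence comes first: it reads
`c ++ v` with `c` a codeword, and `v` contains no codeword, since such a codeword would be a
second occurrence. Conversely, in a non-overlapping code two occurrences of codewords cannot
overlap, so the only cyclic occurrence in any rotation of such a `c ++ v` is the one of `c`.
Hence these words correspond to pairs (rotation, `c ++ v`), and sorting by `|c| = i` gives
`(m + n) * b (m + n - i) * |J(i)|` words for each `i`.
-/

theorem Nat.card_subtype_eq_one_iff {β : Type*} {P : β → Prop} :
    Nat.card {x // P x} = 1 ↔ ∃! x, P x := by
  rw [Nat.card_eq_one_iff_exists]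
  constructor
  · rintro ⟨⟨x, hx⟩, h⟩
    exact ⟨x, hx, fun y hy => congrArg Subtype.val (h ⟨y, hy⟩)⟩
  · rintro ⟨x, hx, h⟩
    exact ⟨⟨x, hx⟩, fun y => Subtype.ext (h y y.2)⟩

namespace List

variable {α : Type*}

theorem rotate_prefix_drop_append_self {l : List α} {n : ℕ} (hn : n ≤ l.length) :
    l.rotate n <+: (l ++ l).drop n := by
  rw [rotate_eq_drop_append_take hn, drop_append_of_le_length hn]
  exact (prefix_append_right_inj _).2 (take_prefix n l)

theorem rotate_sub_rotate {L p : ℕ} {l : List α} (hl : l.length = L) (hp : p ≤ L) :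
    (l.rotate (L - p)).rotate p = l := by
  rw [rotate_rotate, Nat.sub_add_cancel hp, ← hl, rotate_length]

theorem rotate_fin_add {L : ℕ} {w : List α} (hw : w.length = L) (p s : Fin L) :
    w.rotate ↑(p + s) = (w.rotate p).rotate s := by
  subst hw
  rw [rotate_rotate, Fin.val_add, rotate_mod]

end List

def HasCyclicOccurrenceAt {α : Type*} (S : Set (List α)) (w : List α) (p : ℕ) : Prop :=
  ∃ c ∈ S, c <+: w.rotate p

section

variable {α : Type*} {S : Set (List α)}

theorem not_exists_infix_of_unique_occurrence (hS : ∀ x ∈ S, x ≠ []) {L : ℕ} {w c v : List α}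
    (hw : w.length = L) {p : Fin L} (hc : c ∈ S) (hwp : w.rotate p = c ++ v)
    (huniq : ∀ p' : Fin L, HasCyclicOccurrenceAt S w p' → p' = p) : ¬ ∃ x ∈ S, x <:+: v := by
  rintro ⟨x, hx, s, t, rfl⟩
  have hlen : c.length + s.length + x.length + t.length = L := by
    rw [← hw, ← List.length_rotate w p, hwp]
    simp only [List.length_append]
    omega
  have : NeZero L := NeZero.of_pos p.pos
  have hc0 := List.length_pos_iff.2 (hS c hc)
  have hx0 := List.length_pos_iff.2 (hS x hx)
  let k : Fin L := ⟨c.length + s.length, by omega⟩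
  have hocc : HasCyclicOccurrenceAt S w ↑(p + k) := by
    refine ⟨x, hx, ?_⟩
    have hdrop : (c ++ (s ++ x ++ t)).drop k = x ++ t := by
      rw [show c ++ (s ++ x ++ t) = (c ++ s) ++ (x ++ t) by simp, show (k : ℕ) = (c ++ s).length by
        simp [k], List.drop_left]
    rw [List.rotate_fin_add hw, hwp, List.rotate_eq_drop_append_take (by simp [k]), hdrop,
      List.append_assoc]
    exact List.prefix_append _ _
  have hk : (k : ℕ) = 0 := by rw [add_eq_left.1 (huniq _ hocc), Fin.val_zero]
  simp only [k] at hk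
  omega

end

namespace NonOverlapping

variable {α : Type*} {S : Set (List α)}

theorem eq_of_prefix (hno : NonOverlapping S) {c c' w : List α} (hc : c ∈ S) (hc' : c' ∈ S)
    (hcw : c <+: w) (hcw' : c' <+: w) : c = c' := by
  by_contra hne
  rcases le_total c.length c'.length with hle | hle
  · exact hno.2 c' hc' c hc (Ne.symm hne) (List.prefix_of_prefix_length_le hcw hcw' hle).isInfix
  · exact hno.2 c hc c' hc' hne (List.prefix_of_prefix_length_le hcw' hcw hle).isInfix

theorem eq_zero_of_prefix_drop (hno : NonOverlapping S) {c c' w : List α} (hc : c ∈ S)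
    (hc' : c' ∈ S) {k : ℕ} (hcw : c <+: w) (hcw' : c' <+: w.drop k) (hk : k < c.length) :
    k = 0 := by
  by_contra hk0
  have hdrop : c.drop k <+: w.drop k := hcw.drop k
  have hlen : (c.drop k).length = c.length - k := List.length_drop
  rcases le_or_gt c'.length (c.drop k).length with hle | hlt
  · refine hno.2 c hc c' hc' (by rintro rfl; omega) ?_
    exact (List.prefix_of_prefix_length_le hcw' hdrop hle).isInfix.trans
      (List.drop_suffix k c).isInfix
  · refine hno.1 c' hc' c hc (c.drop k) ?_ ?_ ?_
      (List.prefix_of_prefix_length_le hdrop hcw' hlt.le) (List.drop_suffix k c)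
    · intro h
      rw [h, List.length_nil] at hlen
      omega
    · intro h
      rw [h] at hlt
      exact lt_irrefl _ hlt
    · intro h
      rw [h] at hlen
      omega

/-- In `u ++ u` with `u = c ++ v`, `c` occurs at `0` and at `|u|`: an occurrence of `c'` at
`0 < s < |u|` either overlaps one of these two or lies inside `v`. -/
theorem not_prefix_rotate (hno : NonOverlapping S) {c v c' : List α} (hc : c ∈ S)
    (hv : ¬ ∃ x ∈ S, x <:+: v) (hc' : c' ∈ S) {s : ℕ} (hs0 : 0 < s) (hs : s < (c ++ v).length) :
    ¬ c' <+: (c ++ v).rotate s := by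
  intro h
  set u := c ++ v with hu
  have hsu : c' <+: (u ++ u).drop s := h.trans (List.rotate_prefix_drop_append_self hs.le)
  rcases lt_or_ge s c.length with hsc | hcs
  · have hcu : c <+: u ++ u := (List.prefix_append c v).trans (List.prefix_append u u)
    exact hs0.ne' (hno.eq_zero_of_prefix_drop hc hc' hcu hsu hsc)
  rcases le_or_gt (s + c'.length) u.length with hin | hwrap
  · have hdrop : (u ++ u).drop s = v.drop (s - c.length) ++ u := by
      rw [List.drop_append_of_le_length hs.le, hu, List.drop_append, List.drop_eq_nil_of_le hcs,
        List.nil_append]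
    have hc'v : c' <+: v.drop (s - c.length) := by
      rw [hdrop] at hsu
      refine List.prefix_of_prefix_length_le hsu (List.prefix_append _ _) ?_
      simp only [List.length_drop, hu, List.length_append] at hin ⊢
      omega
    exact hv ⟨c', hc', hc'v.isInfix.trans (List.drop_suffix _ v).isInfix⟩
  · have hcu : c <+: ((u ++ u).drop s).drop (u.length - s) := by
      rw [List.drop_drop, Nat.add_sub_cancel' hs.le, List.drop_left]
      exact List.prefix_append c v
    have := hno.eq_zero_of_prefix_drop hc' hc hsu hcu (by omega)
    omega

theorem hasCyclicOccurrenceAt_iff (hno : NonOverlapping S) {L : ℕ} {w c v : List α}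
    (hw : w.length = L) {p : Fin L} (hc : c ∈ S) (hv : ¬ ∃ x ∈ S, x <:+: v)
    (hwp : w.rotate p = c ++ v) (p' : Fin L) : HasCyclicOccurrenceAt S w p' ↔ p' = p := by
  have : NeZero L := NeZero.of_pos p.pos
  constructor
  · rintro ⟨c', hc', h⟩
    by_contra hne
    rw [← add_sub_cancel p p', List.rotate_fin_add hw, hwp] at h
    refine hno.not_prefix_rotate hc hv hc' ?_ ?_ h
    · exact Nat.pos_of_ne_zero (Fin.val_ne_zero_iff.2 (sub_ne_zero.2 hne))
    · rw [← hwp, List.length_rotate, hw]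
      exact (p' - p).isLt
  · rintro rfl
    exact ⟨c, hc, hwp ▸ List.prefix_append c v⟩

/-- Rotating `c ++ v` back by `p` is a bijection onto the words with a unique cyclic occurrence. -/
theorem card_existsUnique_hasCyclicOccurrenceAt (hno : NonOverlapping S) (hS : ∀ x ∈ S, x ≠ [])
    (L : ℕ) :
    Nat.card {w : List α // w.length = L ∧ ∃! p : Fin L, HasCyclicOccurrenceAt S w p} =
      L * Nat.card {cv : List α × List α //
        cv.1 ∈ S ∧ (¬ ∃ x ∈ S, x <:+: cv.2) ∧ cv.1.length + cv.2.length = L} := by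
  let f : Fin L × {cv : List α × List α //
      cv.1 ∈ S ∧ (¬ ∃ x ∈ S, x <:+: cv.2) ∧ cv.1.length + cv.2.length = L} →
      {w : List α // w.length = L ∧ ∃! p : Fin L, HasCyclicOccurrenceAt S w p} :=
    fun ⟨p, ⟨(c, v), hc, hv, hcv⟩⟩ =>
      have hw : ((c ++ v).rotate (L - p)).length = L := by simpa using hcv
      have hwp := List.rotate_sub_rotate (by simpa using hcv) p.isLt.le
      ⟨_, hw, p, (hno.hasCyclicOccurrenceAt_iff hw hc hv hwp p).2 rfl,
        fun p' => (hno.hasCyclicOccurrenceAt_iff hw hc hv hwp p').1⟩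
  have hf : f.Bijective := by
    constructor
    · rintro ⟨p, ⟨c, v⟩, hc, hv, hcv⟩ ⟨p', ⟨c', v'⟩, hc', hv', hcv'⟩ h
      have hcvL : (c ++ v).length = L := by simpa using hcv
      have hcvL' : (c' ++ v').length = L := by simpa using hcv'
      have hw : (c ++ v).rotate (L - p) = (c' ++ v').rotate (L - p') := congrArg Subtype.val h
      have hp : p' = p := by
        refine (hno.hasCyclicOccurrenceAt_iff (by rw [List.length_rotate, hcvL]) hc hv
          (List.rotate_sub_rotate hcvL p.isLt.le) p').1 ⟨c', hc', ?_⟩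
        rw [hw, List.rotate_sub_rotate hcvL' p'.isLt.le]
        exact List.prefix_append c' v'
      subst hp
      have hcv_eq : c ++ v = c' ++ v' := List.rotate_injective _ hw
      obtain rfl := hno.eq_of_prefix hc hc' (hcv_eq ▸ List.prefix_append c v)
        (List.prefix_append c' v')
      obtain rfl := List.append_cancel_left hcv_eq
      rfl
    · rintro ⟨w, hw, p, ⟨c, hc, v, hwp⟩, huniq⟩
      have hv := not_exists_infix_of_unique_occurrence hS hw hc hwp.symm huniq
      refine ⟨⟨p, ⟨(c, v), hc, hv, ?_⟩⟩, ?_⟩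
      · simpa [hw] using congrArg List.length hwp
      · apply Subtype.ext
        show (c ++ v).rotate (L - p) = w
        rw [hwp, List.rotate_rotate, Nat.add_sub_cancel' p.isLt.le, ← hw, List.rotate_length]
  rw [← Nat.card_congr (Equiv.ofBijective f hf), Nat.card_prod, Nat.card_fin]

end NonOverlapping

theorem card_codeword_append_avoiding {α : Type*} [Finite α] {S : Set (List α)} {L : ℕ}
    {I : Finset ℕ} (hS : ∀ c ∈ S, c.length ∈ I) (hI : ∀ i ∈ I, i ≤ L) :
    Nat.card {cv : List α × List α //
        cv.1 ∈ S ∧ (¬ ∃ x ∈ S, x <:+: cv.2) ∧ cv.1.length + cv.2.length = L} =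
      ∑ i ∈ I, Nat.card {c : List α // c ∈ S ∧ c.length = i} *
        Nat.card {v : List α // v.length = L - i ∧ ¬ ∃ x ∈ S, x <:+: v} := by
  have hfin (j : ℕ) (P : List α → Prop) : Finite {w : List α // P w ∧ w.length = j} :=
    ((List.finite_length_eq α j).subset fun _ hw => hw.2).to_subtype
  have hfin' (j : ℕ) (P : List α → Prop) : Finite {w : List α // w.length = j ∧ P w} :=
    ((List.finite_length_eq α j).subset fun _ hw => hw.1).to_subtype
  let e : {cv : List α × List α //
        cv.1 ∈ S ∧ (¬ ∃ x ∈ S, x <:+: cv.2) ∧ cv.1.length + cv.2.length = L} ≃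
      Σ i : I, {c : List α // c ∈ S ∧ c.length = i} ×
        {v : List α // v.length = L - i ∧ ¬ ∃ x ∈ S, x <:+: v} :=
    { toFun := fun ⟨(c, v), hc, hv, hcv⟩ =>
        ⟨⟨c.length, hS c hc⟩, ⟨c, hc, rfl⟩, ⟨v, by dsimp only at hcv ⊢; omega, hv⟩⟩
      invFun := fun ⟨⟨i, hi⟩, ⟨c, hc, hci⟩, ⟨v, hvi, hv⟩⟩ =>
        ⟨(c, v), hc, hv, by have := hI i hi; dsimp only at hci hvi ⊢; omega⟩
      left_inv := fun ⟨(_, _), _, _, _⟩ => rfl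
      right_inv := by
        rintro ⟨⟨i, hi⟩, ⟨c, hc, hci⟩, ⟨v, hvi, hv⟩⟩
        dsimp only at hci
        subst hci
        rfl }
  rw [Nat.card_congr e, Nat.card_sigma, ← Finset.sum_coe_sort I]
  simp only [Nat.card_prod]

theorem stmt19_general (q h n m : ℕ) (hh : 2 ≤ h)
    (𝒥 : Set (List (Fin q))) (hlen : ∀ w ∈ 𝒥, h ≤ w.length ∧ w.length ≤ n)
    (hno : NonOverlapping 𝒥)
    (Jc : ℕ → ℕ) (hJc : ∀ i : ℕ, Jc i = Nat.card {w : List (Fin q) // w ∈ 𝒥 ∧ w.length = i})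
    (b : ℕ → ℕ)
    (hbcard : ∀ j : ℕ, b j = Nat.card {w : List (Fin q) //
      w.length = j ∧ ¬ ∃ c ∈ 𝒥, c <:+: w}) :
    Nat.card {w : List (Fin q) // w.length = m + n ∧
        Nat.card {p : Fin (m + n) // ∃ c ∈ 𝒥, (w.rotate p).take c.length = c} = 1} =
      ∑ i ∈ Finset.Icc h n, (m + n) * b (m + n - i) * Jc i := by
  have hne : ∀ c ∈ 𝒥, c ≠ [] := by
    rintro c hc rfl
    have := hlen [] hc
    simp only [List.length_nil] at this
    omega
  have hcard_eq_one_iff (w : List (Fin q)) :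
      Nat.card {p : Fin (m + n) // ∃ c ∈ 𝒥, (w.rotate p).take c.length = c} = 1 ↔
        ∃! p : Fin (m + n), HasCyclicOccurrenceAt 𝒥 w p := by
    simp only [Nat.card_subtype_eq_one_iff, HasCyclicOccurrenceAt, List.prefix_iff_eq_take,
      @eq_comm _ (List.take _ _)]
  simp only [hcard_eq_one_iff]
  rw [hno.card_existsUnique_hasCyclicOccurrenceAt hne,
    card_codeword_append_avoiding (I := Finset.Icc h n) (fun c hc => Finset.mem_Icc.2 (hlen c hc))
      (fun i hi => by have := Finset.mem_Icc.1 hi; omega), Finset.mul_sum]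
  refine Finset.sum_congr rfl fun i _ => ?_
  rw [hJc, hbcard]
  ring

/-- For a non-overlapping code `𝒥 = ⋃_{i=h}^n J(i)` over `ℤ_q` and
`1 ≤ m < h`, the number of words of length `m + n` over `ℤ_q` that contain exactly one
occurrence of a codeword from `𝒥` as a cyclic subword equals
`∑_{i=h}^n (m+n)·b (m+n-i)·|J(i)|`, where `b j` counts length-`j` words avoiding all
codewords of `𝒥` as (linear) subwords. A cyclic subword of `w` starting at position `p`
with length `i` is the length-`i` prefix of the rotation of `w` by `p`. -/
theorem stmt19 (q h n m : ℕ) (hq : 2 ≤ q) (hh : 2 ≤ h) (hhn : h ≤ n)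
    (hm1 : 1 ≤ m) (hmh : m < h)
    (𝒥 : Set (List (Fin q))) (hlen : ∀ w ∈ 𝒥, h ≤ w.length ∧ w.length ≤ n)
    (hno : NonOverlapping 𝒥)
    (Jc : ℕ → ℕ) (hJc : ∀ i : ℕ, Jc i = Nat.card {w : List (Fin q) // w ∈ 𝒥 ∧ w.length = i})
    (b : ℕ → ℕ)
    (hbcard : ∀ j : ℕ, b j = Nat.card {w : List (Fin q) //
      w.length = j ∧ ¬ ∃ c ∈ 𝒥, c <:+: w}) :
    Nat.card {w : List (Fin q) // w.length = m + n ∧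
        Nat.card {p : Fin (m + n) // ∃ c ∈ 𝒥, (w.rotate p).take c.length = c} = 1} =
      ∑ i ∈ Finset.Icc h n, (m + n) * b (m + n - i) * Jc i :=
  stmt19_general q h n m hh 𝒥 hlen hno Jc hJc b hbcard
end
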